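/- Singularity cancellation identity (equation (csm)): Let ε > 0, γ > 1, ã > 0, p(ρ) = ãρ^γ. Let φ : ℝⁿ → ℝ and u : ℝⁿ → ℝⁿ be smooth functions with sufficient decay at infinity (e.g. Schwartz class) such that ρ := 1 + εφ ≥ c > 0 on ℝⁿ. Then for every multi-index m ∈ ℕⁿ: (1/ε)⟨∂^m div u, p′(ρ)∂^m φ⟩ + (1/ε)⟨∂^m((p′(ρ)/ρ)∇φ), ρ ∂^m u⟩ = −⟨p″(ρ)∇φ ∂^m φ, ∂^m u⟩ + (1/ε)⟨[∂^m, (p′(ρ)/ρ)∇]φ, ρ ∂^m u⟩, where [∂^m, h∇]φ := ∂^m(h∇φ) − h∇(∂^m φ); in particular, for m = 0 the last commutator term vanishes and (1/ε)⟨div u, p′(ρ)φ⟩ + (1/ε)⟨(p′(ρ)/ρ)∇φ, ρu⟩ = −⟨p″(ρ)φ∇φ, u⟩. -/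

import Mathlib

open MeasureTheory Real Filter Topology

noncomputable section

namespace EL

/-- scalar fields on ℝⁿ -/
abbrev SF (n : ℕ) := (Fin n → ℝ) → ℝ
/-- vector fields on ℝⁿ -/
abbrev VF (n : ℕ) := (Fin n → ℝ) → Fin n → ℝ
/-- matrix fields on ℝⁿ -/
abbrev MF (n : ℕ) := (Fin n → ℝ) → Fin n → Fin n → ℝ
/-- time dependent scalar fields -/
abbrev TSF (n : ℕ) := ℝ → SF n
/-- time dependent vector fields -/
abbrev TVF (n : ℕ) := ℝ → VF n

variable {n : ℕ}

/-- spatial partial derivative ∂ᵢ -/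
def pd (i : Fin n) (f : SF n) : SF n := fun x => fderiv ℝ f x (Pi.single i 1)

/-- iterated partial derivative ∂ᵢᵏ -/
def pdPow (i : Fin n) : ℕ → SF n → SF n
  | 0 => id
  | k + 1 => fun f => pd i (pdPow i k f)

/-- multi-index spatial derivative ∂^m -/
def pdM (m : Fin n → ℕ) (f : SF n) : SF n :=
  (List.finRange n).foldr (fun i g => pdPow i (m i) g) f

/-- multi-indices m with |m| ≤ s -/
def degLe (n s : ℕ) : Finset (Fin n → ℕ) :=
  (Fintype.piFinset fun _ : Fin n => Finset.range (s + 1)).filter fun m => ∑ i, m i ≤ s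

/-- multi-indices m with 1 ≤ |m| ≤ s -/
def degBetween (n s : ℕ) : Finset (Fin n → ℕ) :=
  (Fintype.piFinset fun _ : Fin n => Finset.range (s + 1)).filter fun m =>
    1 ≤ ∑ i, m i ∧ ∑ i, m i ≤ s

/-- squared weighted Sobolev norm ‖f‖²_{H^s_w} -/
def sobW (s : ℕ) (w f : SF n) : ℝ := ∑ m ∈ degLe n s, ∫ x, w x * (pdM m f x) ^ 2
/-- squared Sobolev norm ‖f‖²_{H^s} -/
def sob (s : ℕ) (f : SF n) : ℝ := sobW s (fun _ => 1) f
/-- squared weighted homogeneous Sobolev norm ‖f‖²_{Ḣ^s_w} -/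
def sobDotW (s : ℕ) (w f : SF n) : ℝ := ∑ m ∈ degBetween n s, ∫ x, w x * (pdM m f x) ^ 2
/-- squared homogeneous Sobolev norm ‖f‖²_{Ḣ^s} -/
def sobDot (s : ℕ) (f : SF n) : ℝ := sobDotW s (fun _ => 1) f

def sobWv (s : ℕ) (w : SF n) (u : VF n) : ℝ := ∑ i, sobW s w fun x => u x i
def sobv (s : ℕ) (u : VF n) : ℝ := ∑ i, sob s fun x => u x i
def sobDotWv (s : ℕ) (w : SF n) (u : VF n) : ℝ := ∑ i, sobDotW s w fun x => u x i
def sobDotv (s : ℕ) (u : VF n) : ℝ := ∑ i, sobDot s fun x => u x i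

def L2sq (f : SF n) : ℝ := ∫ x, (f x) ^ 2
def L2sqv (u : VF n) : ℝ := ∫ x, ∑ i, (u x i) ^ 2
def l2norm (f : SF n) : ℝ := Real.sqrt (L2sq f)
def l2normv (u : VF n) : ℝ := Real.sqrt (L2sqv u)
def hNorm (s : ℕ) (f : SF n) : ℝ := Real.sqrt (sob s f)
def hNormv (s : ℕ) (u : VF n) : ℝ := Real.sqrt (sobv s u)
def hDotNorm (s : ℕ) (f : SF n) : ℝ := Real.sqrt (sobDot s f)
def hDotNormv (s : ℕ) (u : VF n) : ℝ := Real.sqrt (sobDotv s u)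

/-- L^∞ norm -/
def Linf (f : SF n) : ℝ := (eLpNorm f ⊤ volume).toReal

def intg (f : SF n) : ℝ := ∫ x, f x
def ip (f g : SF n) : ℝ := ∫ x, f x * g x
def ipv (u v : VF n) : ℝ := ∫ x, ∑ i, u x i * v x i

def MemSobW (s : ℕ) (w f : SF n) : Prop :=
  ∀ m ∈ degLe n s, Integrable (fun x => w x * (pdM m f x) ^ 2) volume
def MemSobWv (s : ℕ) (w : SF n) (u : VF n) : Prop := ∀ i, MemSobW s w fun x => u x i
def MemSob (s : ℕ) (f : SF n) : Prop := MemSobW s (fun _ => 1) f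
def MemSobv (s : ℕ) (u : VF n) : Prop := ∀ i, MemSob s fun x => u x i

/-- divergence of a vector field -/
def diverg (u : VF n) : SF n := fun x => ∑ i, pd i (fun y => u y i) x
def grad (f : SF n) : VF n := fun x i => pd i f x
def lap (f : SF n) : SF n := fun x => ∑ i, pd i (pd i f) x
def lapv (d : VF n) : VF n := fun x i => lap (fun y => d y i) x
/-- u·∇f -/
def conv (u : VF n) (f : SF n) : SF n := fun x => ∑ i, u x i * pd i f x
/-- u·∇d componentwise -/
def convV (u d : VF n) : VF n := fun x i => conv u (fun y => d y i) x
/-- divergence of a matrix field, (div M)_i = ∑_j ∂_j M_{ij} -/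
def divMat (M : MF n) : VF n := fun x i => ∑ j, pd j (fun y => M y i j) x

/-- velocity gradient (∇u)_{ij} = ∂_j u_i -/
def Dmat (u : VF n) : MF n := fun x i j => pd j (fun y => u y i) x
/-- rate of strain A = (∇u + ∇uᵀ)/2 -/
def Amat (u : VF n) : MF n := fun x i j => (Dmat u x i j + Dmat u x j i) / 2
/-- skew part B = (∇u − ∇uᵀ)/2 -/
def Bmat (u : VF n) : MF n := fun x i j => (Dmat u x i j - Dmat u x j i) / 2
def mvec (M : MF n) (d : VF n) : VF n := fun x i => ∑ j, M x i j * d x j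
def quadForm (M : MF n) (d : VF n) : SF n := fun x => ∑ i, ∑ j, d x i * M x i j * d x j
def normSq (d : VF n) : SF n := fun x => ∑ i, (d x i) ^ 2
/-- |∇d|² -/
def gradNormSq (d : VF n) : SF n := fun x => ∑ i, ∑ j, (Dmat d x i j) ^ 2
/-- (∇d ⊙ ∇d)_{ij} = ∂_i d · ∂_j d -/
def odotMat (d : VF n) : MF n := fun x i j => ∑ k, Dmat d x k i * Dmat d x k j
def kron (i j : Fin n) : ℝ := if i = j then 1 else 0

/-- ‖∇u‖²_{H^s} -/
def sobGradv (s : ℕ) (u : VF n) : ℝ := ∑ i, ∑ j, sob s fun x => Dmat u x i j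
def gradHNormv (s : ℕ) (u : VF n) : ℝ := Real.sqrt (sobGradv s u)
/-- ‖∇u‖²_{Ḣ^s} -/
def sobDotGradv (s : ℕ) (u : VF n) : ℝ := ∑ i, ∑ j, sobDot s fun x => Dmat u x i j
def gradHDotNormv (s : ℕ) (u : VF n) : ℝ := Real.sqrt (sobDotGradv s u)
/-- ‖∇φ‖²_{H^s_w} -/
def gradSobWv (s : ℕ) (w : SF n) (f : SF n) : ℝ := ∑ i, sobW s w (pd i f)
/-- ‖∇d‖²_{Ḣ^s_w} for a vector field d -/
def gradSobDotWm (s : ℕ) (w : SF n) (d : VF n) : ℝ := ∑ i, ∑ j, sobDotW s w fun x => Dmat d x i j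

/-- local (ball of radius R) squared Sobolev norm -/
def sobLocSq (s : ℕ) (R : ℝ) (f : SF n) : ℝ :=
  ∑ m ∈ degLe n s, ∫ x in Metric.closedBall (0 : Fin n → ℝ) R, (pdM m f x) ^ 2

/-- time derivative of a time-dependent scalar field -/
def dtS (f : TSF n) : TSF n := fun t x => deriv (fun τ => f τ x) t
/-- time derivative of a time-dependent vector field -/
def dtV (u : TVF n) : TVF n := fun t x i => deriv (fun τ => u τ x i) t
/-- material derivative ḋ = ∂_t d + u·∇d -/
def matD (u d : TVF n) : TVF n := fun t x i => dtV d t x i + convV (u t) (d t) x i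

def SmoothS (f : TSF n) : Prop := ContDiff ℝ (⊤ : ℕ∞) fun p : ℝ × (Fin n → ℝ) => f p.1 p.2
def SmoothV (u : TVF n) : Prop := ∀ i, ContDiff ℝ (⊤ : ℕ∞) fun p : ℝ × (Fin n → ℝ) => u p.1 p.2 i

/-- pressure p(ρ) = a ρ^γ -/
def pP (a g r : ℝ) : ℝ := a * r ^ g
/-- p′(ρ) = a γ ρ^(γ−1) -/
def pP' (a g r : ℝ) : ℝ := a * g * r ^ (g - 1)
/-- p″(ρ) = a γ (γ−1) ρ^(γ−2) -/
def pP'' (a g r : ℝ) : ℝ := a * g * (g - 1) * r ^ (g - 2)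

/-- relative pressure entropy Π = (a/(ε²(γ−1)))[ρ^γ − γ(ρ−1) − 1] -/
def PiEnt (a g ε : ℝ) (ρ : SF n) : SF n :=
  fun x => (a / (ε ^ 2 * (g - 1))) * ((ρ x) ^ g - g * (ρ x - 1) - 1)

/-- the physical coefficients of the Ericksen–Leslie system -/
structure Coeffs where
  aP : ℝ
  gam : ℝ
  kap : ℝ
  mu1 : ℝ
  mu2 : ℝ
  mu3 : ℝ
  mu4 : ℝ
  mu5 : ℝ
  mu6 : ℝ
  xi : ℝ
  lam1 : ℝ
  lam2 : ℝ

/-- the standing hypotheses on the coefficients -/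
def Coeffs.good (c : Coeffs) : Prop :=
  0 < c.aP ∧ 1 < c.gam ∧
  c.lam1 = c.mu2 - c.mu3 ∧ c.lam2 = c.mu5 - c.mu6 ∧ c.mu2 + c.mu3 = c.mu6 - c.mu5 ∧
  0 < c.kap ∧ 0 ≤ c.mu1 ∧ 0 < c.mu4 ∧ 0 ≤ c.mu4 / 2 + c.xi ∧
  c.lam1 < 0 ∧ 0 ≤ c.mu5 + c.mu6 + c.lam2 ^ 2 / c.lam1

/-- ρ = 1 + εφ -/
def rhoF (ε : ℝ) (φ : SF n) : SF n := fun x => 1 + ε * φ x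

/-- viscous stress Σ₁ -/
def Sigma1 (mu4 xi : ℝ) (u : VF n) : MF n :=
  fun x i j => (mu4 / 2) * (Dmat u x i j + Dmat u x j i) + xi * diverg u x * kron i j

/-- Ericksen elastic stress Σ₂ -/
def Sigma2 (kap : ℝ) (d : VF n) : MF n :=
  fun x i j => (kap / 2) * gradNormSq d x * kron i j - kap * odotMat d x i j

/-- Leslie stress σ̃(u,d,ḋ) -/
def leslie (mu1 mu2 mu3 mu5 mu6 : ℝ) (u d dd : VF n) : MF n :=
  fun x i j =>
    mu1 * quadForm (Amat u) d x * d x i * d x j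
    + mu2 * d x i * (dd x j + mvec (Bmat u) d x j)
    + mu3 * d x j * (dd x i + mvec (Bmat u) d x i)
    + mu5 * d x i * mvec (Amat u) d x j
    + mu6 * d x j * mvec (Amat u) d x i

def leslieC (c : Coeffs) (u d dd : VF n) : MF n := leslie c.mu1 c.mu2 c.mu3 c.mu5 c.mu6 u d dd

/-- total stress Σ₁ + Σ₂ + Σ₃ -/
def SigmaAll (c : Coeffs) (u d dd : VF n) : MF n :=
  fun x i j => Sigma1 c.mu4 c.xi u x i j + Sigma2 c.kap d x i j + leslieC c u d dd x i j

/-- Lagrange multiplier Γ^ε = −ρ|ḋ|² + κ|∇d|² − λ₂ dᵀAd -/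
def GammaC (kap lam2 : ℝ) (ρ : SF n) (u d dd : VF n) : SF n :=
  fun x => - ρ x * normSq dd x + kap * gradNormSq d x - lam2 * quadForm (Amat u) d x

/-- incompressible Lagrange multiplier Γ = −|ḋ|² + κ|∇d|² − λ₂ dᵀAd -/
def GammaI (kap lam2 : ℝ) (u d dd : VF n) : SF n :=
  fun x => - normSq dd x + kap * gradNormSq d x - lam2 * quadForm (Amat u) d x

/-- the compressible Ericksen–Leslie hyperbolic system (csys), satisfied for t in S -/
def IsCsysOn (c : Coeffs) (ε : ℝ) (φ : TSF n) (u d : TVF n) (S : Set ℝ) : Prop :=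
  ∀ t ∈ S, ∀ x,
    (dtS φ t x + conv (u t) (φ t) x + φ t x * diverg (u t) x
        + (1 / ε) * diverg (u t) x = 0)
    ∧ (∀ i,
        dtV u t x i + convV (u t) (u t) x i
          + (1 / ε) * (pP' c.aP c.gam (rhoF ε (φ t) x) / rhoF ε (φ t) x) * pd i (φ t) x
        = (1 / rhoF ε (φ t) x) * divMat (SigmaAll c (u t) (d t) (matD u d t)) x i)
    ∧ (∀ i,
        matD u (matD u d) t x i
        = c.kap * (1 / rhoF ε (φ t) x) * lapv (d t) x i
          + (1 / rhoF ε (φ t) x)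
              * GammaC c.kap c.lam2 (rhoF ε (φ t)) (u t) (d t) (matD u d t) x * d t x i
          + c.lam1 * (1 / rhoF ε (φ t) x) * (matD u d t x i + mvec (Bmat (u t)) (d t) x i)
          + c.lam2 * (1 / rhoF ε (φ t) x) * mvec (Amat (u t)) (d t) x i)
    ∧ normSq (d t) x = 1

/-- the incompressible Ericksen–Leslie hyperbolic system (isys), satisfied for t in S -/
def IsIsysOn (c : Coeffs) (u : TVF n) (pr : TSF n) (d : TVF n) (S : Set ℝ) : Prop :=
  ∀ t ∈ S, ∀ x,
    diverg (u t) x = 0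
    ∧ (∀ i,
        dtV u t x i + convV (u t) (u t) x i - (c.mu4 / 2) * lapv (u t) x i + pd i (pr t) x
        = - c.kap * divMat (odotMat (d t)) x i
          + divMat (leslieC c (u t) (d t) (matD u d t)) x i)
    ∧ (∀ i,
        matD u (matD u d) t x i
        = c.kap * lapv (d t) x i
          + GammaI c.kap c.lam2 (u t) (d t) (matD u d t) x * d t x i
          + c.lam1 * (matD u d t x i + mvec (Bmat (u t)) (d t) x i)
          + c.lam2 * mvec (Amat (u t)) (d t) x i)
    ∧ normSq (d t) x = 1

/-- the energy functional E_s(φ, u, d) -/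
def Es (c : Coeffs) (ε : ℝ) (s : ℕ) (φ : TSF n) (u d : TVF n) (t : ℝ) : ℝ :=
  sobW s (fun x => pP' c.aP c.gam (rhoF ε (φ t) x)) (φ t)
  + sobWv s (rhoF ε (φ t)) (u t)
  + sobWv s (rhoF ε (φ t)) (matD u d t)
  + c.kap * sobGradv s (d t)

/-- the initial energy -/
def dataE (c : Coeffs) (ε : ℝ) (s : ℕ) (φ₀ : SF n) (u₀ dt₀ d₀ : VF n) : ℝ :=
  sobW s (fun x => pP' c.aP c.gam (rhoF ε φ₀ x)) φ₀
  + sobWv s (rhoF ε φ₀) u₀ + sobWv s (rhoF ε φ₀) dt₀ + c.kap * sobGradv s d₀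

/-- the energy dissipation rate functional D_s(u, d) -/
def Ds (c : Coeffs) (s : ℕ) (u d dd : VF n) : ℝ :=
  (c.mu4 / 2) * sobGradv s u + (c.mu4 / 2 + c.xi) * sob s (diverg u)
  + c.mu1 * (∑ m ∈ degLe n s,
      L2sq fun x => ∑ i, ∑ j, d x i * pdM m (fun y => Amat u y i j) x * d x j)
  - c.lam1 * (∑ m ∈ degLe n s,
      L2sqv fun x k =>
        pdM m (fun y => dd y k) x
          + (∑ j, pdM m (fun y => Bmat u y k j) x * d x j)
          + (c.lam2 / c.lam1) * ∑ j, pdM m (fun y => Amat u y k j) x * d x j)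
  + (c.mu5 + c.mu6 + c.lam2 ^ 2 / c.lam1) * (∑ m ∈ degLe n s,
      L2sqv fun x k => ∑ j, pdM m (fun y => Amat u y k j) x * d x j)

/-- the functional A_s -/
def As (s : ℕ) (φ : SF n) (u d dd : VF n) : ℝ :=
  (hDotNorm s φ + hDotNormv s u + gradHDotNormv s d + hNormv s dd)
  * (gradHNormv s u + hDotNorm s φ + gradHDotNormv s d + hNormv s dd)

/-- the exponential factor Q_c(u)(t) = exp(c ∫₀ᵗ ‖div u‖_{L^∞} dτ) -/
def Qfun (cst : ℝ) (u : TVF n) (t : ℝ) : ℝ :=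
  Real.exp (cst * ∫ τ in (0:ℝ)..t, Linf (diverg (u τ)))

/-- smooth compactly supported space-time test functions -/
def TestFun (ζ : TSF n) : Prop :=
  ContDiff ℝ (⊤ : ℕ∞) (fun p : ℝ × (Fin n → ℝ) => ζ p.1 p.2)
  ∧ HasCompactSupport (fun p : ℝ × (Fin n → ℝ) => ζ p.1 p.2)

section SingCancelHelpers

variable {n : ℕ}

lemma pd_contDiff {f : SF n} (hf : ContDiff ℝ (⊤ : ℕ∞) f) (i : Fin n) : ContDiff ℝ (⊤ : ℕ∞) (pd i f) :=
  (hf.fderiv_right (by simp)).clm_apply contDiff_const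

lemma pd_hcs {f : SF n} (hf : HasCompactSupport f) (i : Fin n) : HasCompactSupport (pd i f) :=
  hf.fderiv_apply ℝ (Pi.single i 1)

lemma pd_comm {f : SF n} (hf : ContDiff ℝ (⊤ : ℕ∞) f) (i j : Fin n) : pd i (pd j f) = pd j (pd i f) := by
  funext x
  have hd : Differentiable ℝ (fderiv ℝ f) := (hf.fderiv_right (m := (⊤ : ℕ∞)) (by simp)).differentiable (by simp)
  have key : ∀ (w v : Fin n → ℝ),
      fderiv ℝ (fun y => fderiv ℝ f y w) x v = fderiv ℝ (fderiv ℝ f) x v w := by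
    intro w v
    rw [fderiv_clm_apply (hd x) (differentiableAt_const w)]
    simp
  have symm := (hf.contDiffAt (x := x)).isSymmSndFDerivAt (n := (⊤ : ℕ∞)) (by rw [minSmoothness_of_isRCLikeNormedField]; exact WithTop.coe_le_coe.mpr (le_top : (2 : ℕ∞) ≤ ⊤))
  unfold pd
  rw [key, key]
  exact symm _ _

lemma pdPow_contDiff {f : SF n} (hf : ContDiff ℝ (⊤ : ℕ∞) f) (i : Fin n) (k : ℕ) :
    ContDiff ℝ (⊤ : ℕ∞) (pdPow i k f) := by
  induction k with
  | zero => exact hf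
  | succ k ih => exact pd_contDiff ih i

lemma pdPow_hcs {f : SF n} (hf : HasCompactSupport f) (i : Fin n) (k : ℕ) :
    HasCompactSupport (pdPow i k f) := by
  induction k with
  | zero => exact hf
  | succ k ih => exact pd_hcs ih i

lemma pdPow_pd_comm {f : SF n} (hf : ContDiff ℝ (⊤ : ℕ∞) f) (i j : Fin n) (k : ℕ) :
    pdPow i k (pd j f) = pd j (pdPow i k f) := by
  induction k with
  | zero => rfl
  | succ k ih =>
      show pd i (pdPow i k (pd j f)) = pd j (pd i (pdPow i k f))
      rw [ih, pd_comm (pdPow_contDiff hf i k) i j]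

lemma foldr_contDiff (m : Fin n → ℕ) (l : List (Fin n)) {f : SF n} (hf : ContDiff ℝ (⊤ : ℕ∞) f) :
    ContDiff ℝ (⊤ : ℕ∞) (l.foldr (fun i g => pdPow i (m i) g) f) := by
  induction l with
  | nil => exact hf
  | cons a l ih => exact pdPow_contDiff ih a (m a)

lemma foldr_hcs (m : Fin n → ℕ) (l : List (Fin n)) {f : SF n} (hf : HasCompactSupport f) :
    HasCompactSupport (l.foldr (fun i g => pdPow i (m i) g) f) := by
  induction l with
  | nil => exact hf
  | cons a l ih => exact pdPow_hcs ih a (m a)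

lemma pdM_contDiff {f : SF n} (hf : ContDiff ℝ (⊤ : ℕ∞) f) (m : Fin n → ℕ) :
    ContDiff ℝ (⊤ : ℕ∞) (pdM m f) := foldr_contDiff m _ hf

lemma pdM_hcs {f : SF n} (hf : HasCompactSupport f) (m : Fin n → ℕ) :
    HasCompactSupport (pdM m f) := foldr_hcs m _ hf

lemma foldr_pd_comm (m : Fin n → ℕ) (l : List (Fin n)) {f : SF n} (hf : ContDiff ℝ (⊤ : ℕ∞) f)
    (j : Fin n) :
    l.foldr (fun i g => pdPow i (m i) g) (pd j f) = pd j (l.foldr (fun i g => pdPow i (m i) g) f) := by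
  induction l with
  | nil => rfl
  | cons a l ih =>
      show pdPow a (m a) (l.foldr _ (pd j f)) = pd j (pdPow a (m a) (l.foldr _ f))
      rw [ih, pdPow_pd_comm (foldr_contDiff m l hf) a j]

lemma pdM_pd_comm {f : SF n} (hf : ContDiff ℝ (⊤ : ℕ∞) f) (m : Fin n → ℕ) (j : Fin n) :
    pdM m (pd j f) = pd j (pdM m f) := foldr_pd_comm m _ hf j

lemma pdM_zero (f : SF n) : pdM (fun _ => 0) f = f := by
  unfold pdM
  induction List.finRange n with
  | nil => rfl
  | cons a l ih => exact ih

lemma pd_sum {ι : Type*} (s : Finset ι) (F : ι → SF n)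
    (hF : ∀ k ∈ s, ContDiff ℝ (⊤ : ℕ∞) (F k)) (i : Fin n) :
    pd i (fun x => ∑ k ∈ s, F k x) = fun x => ∑ k ∈ s, pd i (F k) x := by
  funext x
  unfold pd
  rw [fderiv_fun_sum (fun k hk => ((hF k hk).differentiable (by simp)).differentiableAt)]
  simp

lemma pdPow_sum {ι : Type*} (s : Finset ι) (F : ι → SF n)
    (hF : ∀ k ∈ s, ContDiff ℝ (⊤ : ℕ∞) (F k)) (i : Fin n) (kk : ℕ) :
    pdPow i kk (fun x => ∑ k ∈ s, F k x) = fun x => ∑ k ∈ s, pdPow i kk (F k) x := by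
  induction kk with
  | zero => rfl
  | succ kk ih =>
      show pd i (pdPow i kk fun x => ∑ k ∈ s, F k x) = _
      rw [ih, pd_sum s _ (fun k hk => pdPow_contDiff (hF k hk) i kk) i]
      rfl

lemma foldr_sum {ι : Type*} (m : Fin n → ℕ) (l : List (Fin n)) (s : Finset ι) (F : ι → SF n)
    (hF : ∀ k ∈ s, ContDiff ℝ (⊤ : ℕ∞) (F k)) :
    l.foldr (fun i g => pdPow i (m i) g) (fun x => ∑ k ∈ s, F k x)
      = fun x => ∑ k ∈ s, l.foldr (fun i g => pdPow i (m i) g) (F k) x := by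
  induction l with
  | nil => rfl
  | cons a l ih =>
      show pdPow a (m a) (l.foldr _ _) = _
      rw [ih, pdPow_sum s _ (fun k hk => foldr_contDiff m l (hF k hk)) a (m a)]
      rfl

lemma pdM_sum {ι : Type*} (m : Fin n → ℕ) (s : Finset ι) (F : ι → SF n)
    (hF : ∀ k ∈ s, ContDiff ℝ (⊤ : ℕ∞) (F k)) :
    pdM m (fun x => ∑ k ∈ s, F k x) = fun x => ∑ k ∈ s, pdM m (F k) x :=
  foldr_sum m _ s F hF

lemma pd_mul {f g : SF n} (hf : ContDiff ℝ (⊤ : ℕ∞) f) (hg : ContDiff ℝ (⊤ : ℕ∞) g) (i : Fin n)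
    (x : Fin n → ℝ) :
    pd i (fun y => f y * g y) x = pd i f x * g x + f x * pd i g x := by
  unfold pd
  rw [fderiv_fun_mul ((hf.differentiable (by simp)).differentiableAt)
    ((hg.differentiable (by simp)).differentiableAt)]
  simp
  ring

lemma integrable_mul_right_hcs {a b : SF n} (ha : Continuous a) (hb : Continuous b)
    (hsb : HasCompactSupport b) : Integrable (fun x => a x * b x) volume :=
  (ha.mul hb).integrable_of_hasCompactSupport (hsb.mul_left)

lemma integrable_mul_left_hcs {a b : SF n} (ha : Continuous a) (hb : Continuous b)
    (hsa : HasCompactSupport a) : Integrable (fun x => a x * b x) volume :=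
  (ha.mul hb).integrable_of_hasCompactSupport (hsa.mul_right)

lemma ibp {f g : SF n} (hf : ContDiff ℝ (⊤ : ℕ∞) f) (hg : ContDiff ℝ (⊤ : ℕ∞) g)
    (hfs : HasCompactSupport f) (i : Fin n) :
    ∫ x, pd i f x * g x = - ∫ x, f x * pd i g x := by
  have h := integral_mul_fderiv_eq_neg_fderiv_mul_of_integrable (μ := volume)
    (f := f) (g := g) (v := Pi.single i 1)
    (integrable_mul_left_hcs (pd_contDiff hf i).continuous hg.continuous (pd_hcs hfs i))
    (integrable_mul_left_hcs hf.continuous (pd_contDiff hg i).continuous hfs)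
    (integrable_mul_left_hcs hf.continuous hg.continuous hfs)
    (fun x _ => (hf.differentiable (by simp)).differentiableAt) (fun x _ => (hg.differentiable (by simp)).differentiableAt)
  unfold pd
  linarith [h]
lemma pd_pP'X {ε aP gam : ℝ} {φ : SF n} (hφ : ContDiff ℝ (⊤ : ℕ∞) φ)
    (hne : ∀ x, rhoF ε φ x ≠ 0) (i : Fin n) (x : Fin n → ℝ) :
    pd i (fun y => pP' aP gam (rhoF ε φ y)) x
      = pP'' aP gam (rhoF ε φ x) * (ε * pd i φ x) := by
  have h0 : HasFDerivAt φ (fderiv ℝ φ x) x := (hφ.differentiable (by simp) x).hasFDerivAt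
  have hρ' : HasFDerivAt (rhoF ε φ) (ε • fderiv ℝ φ x) x := (h0.const_mul ε).const_add 1
  have hr : HasDerivAt (fun t : ℝ => aP * gam * t ^ (gam - 1))
      ((aP * gam) * ((gam - 1) * (rhoF ε φ x) ^ (gam - 1 - 1))) (rhoF ε φ x) :=
    (Real.hasDerivAt_rpow_const (p := gam - 1) (Or.inl (hne x))).const_mul (aP * gam)
  have hcomp : HasFDerivAt (fun y => pP' aP gam (rhoF ε φ y))
      (((aP * gam) * ((gam - 1) * (rhoF ε φ x) ^ (gam - 1 - 1))) • (ε • fderiv ℝ φ x)) x :=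
    hr.comp_hasFDerivAt x hρ'
  have hfd := hcomp.fderiv
  unfold pd
  rw [hfd, show gam - 1 - 1 = gam - 2 from by ring]
  unfold pP''
  simp [smul_smul]
  ring

lemma contDiff_pP'X {ε aP gam : ℝ} {φ : SF n} (hφ : ContDiff ℝ (⊤ : ℕ∞) φ)
    (hne : ∀ x, rhoF ε φ x ≠ 0) :
    ContDiff ℝ (⊤ : ℕ∞) (fun x => pP' aP gam (rhoF ε φ x)) := by
  have hρsm : ContDiff ℝ (⊤ : ℕ∞) (rhoF ε φ) := contDiff_const.add (contDiff_const.mul hφ)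
  rw [contDiff_iff_contDiffAt]
  intro x
  exact (hρsm.contDiffAt.rpow_const_of_ne (hne x)).const_smul (aP * gam)

lemma contDiff_pP''X {ε aP gam : ℝ} {φ : SF n} (hφ : ContDiff ℝ (⊤ : ℕ∞) φ)
    (hne : ∀ x, rhoF ε φ x ≠ 0) :
    ContDiff ℝ (⊤ : ℕ∞) (fun x => pP'' aP gam (rhoF ε φ x)) := by
  have hρsm : ContDiff ℝ (⊤ : ℕ∞) (rhoF ε φ) := contDiff_const.add (contDiff_const.mul hφ)
  rw [contDiff_iff_contDiffAt]
  intro x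
  exact (hρsm.contDiffAt.rpow_const_of_ne (hne x)).const_smul (aP * gam * (gam - 1))

lemma key (ε aP gam : ℝ) (hε : ε ≠ 0) (φ : SF n) (u : VF n)
    (hφ : ContDiff ℝ (⊤ : ℕ∞) φ) (hu : ∀ i, ContDiff ℝ (⊤ : ℕ∞) fun x => u x i)
    (hφsupp : HasCompactSupport φ) (husupp : ∀ i, HasCompactSupport fun x => u x i)
    (hρne : ∀ x, rhoF ε φ x ≠ 0) (m : Fin n → ℕ) :
    (1 / ε) * (∫ x, pdM m (diverg u) x * (pP' aP gam (rhoF ε φ x) * pdM m φ x))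
      + (1 / ε) * (∫ x, ∑ i,
          pdM m (fun y => (pP' aP gam (rhoF ε φ y) / rhoF ε φ y) * pd i φ y) x
            * (rhoF ε φ x * pdM m (fun y => u y i) x))
      = - (∫ x, ∑ i,
            pP'' aP gam (rhoF ε φ x) * pd i φ x * pdM m φ x * pdM m (fun y => u y i) x)
        + (1 / ε) * (∫ x, ∑ i,
            (pdM m (fun y => (pP' aP gam (rhoF ε φ y) / rhoF ε φ y) * pd i φ y) x
              - (pP' aP gam (rhoF ε φ x) / rhoF ε φ x) * pd i (pdM m φ) x)
              * (rhoF ε φ x * pdM m (fun y => u y i) x)) := by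
  have hρsm : ContDiff ℝ (⊤ : ℕ∞) (rhoF ε φ) := contDiff_const.add (contDiff_const.mul hφ)
  have hPsm : ContDiff ℝ (⊤ : ℕ∞) (fun x => pP' aP gam (rhoF ε φ x)) := contDiff_pP'X hφ hρne
  have hWsm : ContDiff ℝ (⊤ : ℕ∞) (fun x => pP'' aP gam (rhoF ε φ x)) := contDiff_pP''X hφ hρne
  have hQsm : ContDiff ℝ (⊤ : ℕ∞) (fun x => pP' aP gam (rhoF ε φ x) / rhoF ε φ x) := hPsm.div hρsm hρne
  have hGsm : ContDiff ℝ (⊤ : ℕ∞) (pdM m φ) := pdM_contDiff hφ m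
  have hGcs : HasCompactSupport (pdM m φ) := pdM_hcs hφsupp m
  have hFsm : ∀ i : Fin n, ContDiff ℝ (⊤ : ℕ∞) (pdM m (fun y => u y i)) :=
    fun i => pdM_contDiff (hu i) m
  have hFcs : ∀ i : Fin n, HasCompactSupport (pdM m (fun y => u y i)) :=
    fun i => pdM_hcs (husupp i) m
  have hhsm : ∀ i : Fin n,
      ContDiff ℝ (⊤ : ℕ∞) (fun y => (pP' aP gam (rhoF ε φ y) / rhoF ε φ y) * pd i φ y) :=
    fun i => hQsm.mul (pd_contDiff hφ i)
  -- integrability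
  have ia : ∀ i : Fin n, Integrable (fun x =>
      pd i (pdM m (fun y => u y i)) x * (pP' aP gam (rhoF ε φ x) * pdM m φ x)) volume :=
    fun i => integrable_mul_left_hcs (pd_contDiff (hFsm i) i).continuous
      (hPsm.continuous.mul hGsm.continuous) (pd_hcs (hFcs i) i)
  have ib : ∀ i : Fin n, Integrable (fun x =>
      pP'' aP gam (rhoF ε φ x) * pd i φ x * pdM m φ x * pdM m (fun y => u y i) x) volume :=
    fun i => integrable_mul_right_hcs
      ((hWsm.continuous.mul (pd_contDiff hφ i).continuous).mul hGsm.continuous)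
      (hFsm i).continuous (hFcs i)
  have ic : ∀ i : Fin n, Integrable (fun x =>
      pP' aP gam (rhoF ε φ x) * pd i (pdM m φ) x * pdM m (fun y => u y i) x) volume :=
    fun i => integrable_mul_right_hcs
      (hPsm.continuous.mul (pd_contDiff hGsm i).continuous)
      (hFsm i).continuous (hFcs i)
  have hρFcs : ∀ i : Fin n, HasCompactSupport
      (fun x => rhoF ε φ x * pdM m (fun y => u y i) x) := fun i => (hFcs i).mul_left
  have ie : ∀ i : Fin n, Integrable (fun x =>
      pdM m (fun y => (pP' aP gam (rhoF ε φ y) / rhoF ε φ y) * pd i φ y) x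
        * (rhoF ε φ x * pdM m (fun y => u y i) x)) volume :=
    fun i => integrable_mul_right_hcs (pdM_contDiff (hhsm i) m).continuous
      (hρsm.continuous.mul (hFsm i).continuous) (hρFcs i)
  have idd : ∀ i : Fin n, Integrable (fun x =>
      (pdM m (fun y => (pP' aP gam (rhoF ε φ y) / rhoF ε φ y) * pd i φ y) x
        - (pP' aP gam (rhoF ε φ x) / rhoF ε φ x) * pd i (pdM m φ) x)
        * (rhoF ε φ x * pdM m (fun y => u y i) x)) volume :=
    fun i => integrable_mul_right_hcs
      ((pdM_contDiff (hhsm i) m).continuous.sub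
        (hQsm.continuous.mul (pd_contDiff hGsm i).continuous))
      (hρsm.continuous.mul (hFsm i).continuous) (hρFcs i)
  -- divergence commutation
  have hdiv : pdM m (diverg u) = fun x => ∑ i, pd i (pdM m (fun y => u y i)) x := by
    have h1 := pdM_sum m Finset.univ (fun i => pd i (fun y => u y i))
      (fun i _ => pd_contDiff (hu i) i)
    calc pdM m (diverg u)
        = fun x => ∑ i, pdM m (pd i (fun y => u y i)) x := h1
      _ = fun x => ∑ i, pd i (pdM m (fun y => u y i)) x := by
          funext x
          exact Finset.sum_congr rfl fun i _ => by rw [pdM_pd_comm (hu i) m i]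
  -- I1
  have hI1 : (∫ x, pdM m (diverg u) x * (pP' aP gam (rhoF ε φ x) * pdM m φ x))
      = ∑ i, ∫ x, pd i (pdM m (fun y => u y i)) x
          * (pP' aP gam (rhoF ε φ x) * pdM m φ x) := by
    have hp : ∀ x, pdM m (diverg u) x * (pP' aP gam (rhoF ε φ x) * pdM m φ x)
        = ∑ i, pd i (pdM m (fun y => u y i)) x * (pP' aP gam (rhoF ε φ x) * pdM m φ x) := by
      intro x
      simp only [hdiv, Finset.sum_mul]
    rw [show (fun x => pdM m (diverg u) x * (pP' aP gam (rhoF ε φ x) * pdM m φ x))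
        = fun x => ∑ i, pd i (pdM m (fun y => u y i)) x
            * (pP' aP gam (rhoF ε φ x) * pdM m φ x) from funext hp]
    exact integral_finset_sum _ fun i _ => ia i
  have hI2 : (∫ x, ∑ i,
        pdM m (fun y => (pP' aP gam (rhoF ε φ y) / rhoF ε φ y) * pd i φ y) x
          * (rhoF ε φ x * pdM m (fun y => u y i) x))
      = ∑ i, ∫ x,
        pdM m (fun y => (pP' aP gam (rhoF ε φ y) / rhoF ε φ y) * pd i φ y) x
          * (rhoF ε φ x * pdM m (fun y => u y i) x) :=
    integral_finset_sum _ fun i _ => ie i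
  have hI3 : (∫ x, ∑ i,
        pP'' aP gam (rhoF ε φ x) * pd i φ x * pdM m φ x * pdM m (fun y => u y i) x)
      = ∑ i, ∫ x,
        pP'' aP gam (rhoF ε φ x) * pd i φ x * pdM m φ x * pdM m (fun y => u y i) x :=
    integral_finset_sum _ fun i _ => ib i
  have hI4 : (∫ x, ∑ i,
        (pdM m (fun y => (pP' aP gam (rhoF ε φ y) / rhoF ε φ y) * pd i φ y) x
          - (pP' aP gam (rhoF ε φ x) / rhoF ε φ x) * pd i (pdM m φ) x)
          * (rhoF ε φ x * pdM m (fun y => u y i) x))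
      = ∑ i, ∫ x,
        (pdM m (fun y => (pP' aP gam (rhoF ε φ y) / rhoF ε φ y) * pd i φ y) x
          - (pP' aP gam (rhoF ε φ x) / rhoF ε φ x) * pd i (pdM m φ) x)
          * (rhoF ε φ x * pdM m (fun y => u y i) x) :=
    integral_finset_sum _ fun i _ => idd i
  -- per-index integration by parts
  have hA : ∀ i : Fin n,
      (∫ x, pd i (pdM m (fun y => u y i)) x * (pP' aP gam (rhoF ε φ x) * pdM m φ x))
      = -(ε * (∫ x, pP'' aP gam (rhoF ε φ x) * pd i φ x * pdM m φ x
                * pdM m (fun y => u y i) x)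
          + (∫ x, pP' aP gam (rhoF ε φ x) * pd i (pdM m φ) x
                * pdM m (fun y => u y i) x)) := by
    intro i
    have h1 := ibp (hFsm i) (hPsm.mul hGsm) (hFcs i) i
    rw [h1]
    have h2 : ∀ x, pdM m (fun y => u y i) x
        * pd i (fun x => pP' aP gam (rhoF ε φ x) * pdM m φ x) x
        = ε * (pP'' aP gam (rhoF ε φ x) * pd i φ x * pdM m φ x * pdM m (fun y => u y i) x)
          + pP' aP gam (rhoF ε φ x) * pd i (pdM m φ) x * pdM m (fun y => u y i) x := by
      intro x
      rw [pd_mul hPsm hGsm i x, pd_pP'X hφ hρne i x]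
      ring
    rw [show (fun x => pdM m (fun y => u y i) x
        * pd i (fun x => pP' aP gam (rhoF ε φ x) * pdM m φ x) x)
        = fun x => ε * (pP'' aP gam (rhoF ε φ x) * pd i φ x * pdM m φ x
              * pdM m (fun y => u y i) x)
          + pP' aP gam (rhoF ε φ x) * pd i (pdM m φ) x * pdM m (fun y => u y i) x
        from funext h2]
    rw [integral_add ((ib i).const_mul ε) (ic i), integral_const_mul]
  -- splitting of the commutator
  have hE : ∀ i : Fin n,
      (∫ x, pdM m (fun y => (pP' aP gam (rhoF ε φ y) / rhoF ε φ y) * pd i φ y) x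
          * (rhoF ε φ x * pdM m (fun y => u y i) x))
      = (∫ x, (pdM m (fun y => (pP' aP gam (rhoF ε φ y) / rhoF ε φ y) * pd i φ y) x
            - (pP' aP gam (rhoF ε φ x) / rhoF ε φ x) * pd i (pdM m φ) x)
            * (rhoF ε φ x * pdM m (fun y => u y i) x))
        + (∫ x, pP' aP gam (rhoF ε φ x) * pd i (pdM m φ) x * pdM m (fun y => u y i) x) := by
    intro i
    have hp : ∀ x, pdM m (fun y => (pP' aP gam (rhoF ε φ y) / rhoF ε φ y) * pd i φ y) x
          * (rhoF ε φ x * pdM m (fun y => u y i) x)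
        = (pdM m (fun y => (pP' aP gam (rhoF ε φ y) / rhoF ε φ y) * pd i φ y) x
            - (pP' aP gam (rhoF ε φ x) / rhoF ε φ x) * pd i (pdM m φ) x)
            * (rhoF ε φ x * pdM m (fun y => u y i) x)
          + pP' aP gam (rhoF ε φ x) * pd i (pdM m φ) x * pdM m (fun y => u y i) x := by
      intro x
      have key : pP' aP gam (rhoF ε φ x) / rhoF ε φ x * pd i (pdM m φ) x
          * (rhoF ε φ x * pdM m (fun y => u y i) x)
          = pP' aP gam (rhoF ε φ x) * pd i (pdM m φ) x * pdM m (fun y => u y i) x := by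
        field_simp [hρne x]
      rw [sub_mul, key]
      ring
    rw [show (fun x => pdM m (fun y => (pP' aP gam (rhoF ε φ y) / rhoF ε φ y) * pd i φ y) x
          * (rhoF ε φ x * pdM m (fun y => u y i) x)) = _ from funext hp]
    exact integral_add (idd i) (ic i)
  rw [hI1, hI2, hI3, hI4]
  rw [Finset.sum_congr rfl fun i _ => hA i, Finset.sum_congr rfl fun i _ => hE i]
  rw [Finset.sum_add_distrib]
  simp only [neg_add_rev, Finset.sum_add_distrib, Finset.sum_neg_distrib, ← Finset.mul_sum]
  field_simp
  ring

end SingCancelHelpers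

/-- singularity cancellation identity (equation (csm)). -/
theorem singularity_cancellation
    (n : ℕ) (ε aP gam : ℝ) (hε : 0 < ε) (ha : 0 < aP) (hγ : 1 < gam)
    (φ : SF n) (u : VF n) (cpos : ℝ) (hc : 0 < cpos)
    (hφ : ContDiff ℝ (⊤ : ℕ∞) φ) (hu : ∀ i, ContDiff ℝ (⊤ : ℕ∞) fun x => u x i)
    (hφsupp : HasCompactSupport φ) (husupp : ∀ i, HasCompactSupport fun x => u x i)
    (hρ : ∀ x, cpos ≤ rhoF ε φ x) :
    (∀ m : Fin n → ℕ,
      (1 / ε) * (∫ x, pdM m (diverg u) x * (pP' aP gam (rhoF ε φ x) * pdM m φ x))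
      + (1 / ε) * (∫ x, ∑ i,
          pdM m (fun y => (pP' aP gam (rhoF ε φ y) / rhoF ε φ y) * pd i φ y) x
            * (rhoF ε φ x * pdM m (fun y => u y i) x))
      = - (∫ x, ∑ i,
            pP'' aP gam (rhoF ε φ x) * pd i φ x * pdM m φ x * pdM m (fun y => u y i) x)
        + (1 / ε) * (∫ x, ∑ i,
            (pdM m (fun y => (pP' aP gam (rhoF ε φ y) / rhoF ε φ y) * pd i φ y) x
              - (pP' aP gam (rhoF ε φ x) / rhoF ε φ x) * pd i (pdM m φ) x)
              * (rhoF ε φ x * pdM m (fun y => u y i) x)))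
    ∧ ((1 / ε) * (∫ x, diverg u x * (pP' aP gam (rhoF ε φ x) * φ x))
        + (1 / ε) * (∫ x, ∑ i,
            (pP' aP gam (rhoF ε φ x) / rhoF ε φ x) * pd i φ x * (rhoF ε φ x * u x i))
      = - ∫ x, ∑ i, pP'' aP gam (rhoF ε φ x) * φ x * pd i φ x * u x i) := by
  have hρne : ∀ x, rhoF ε φ x ≠ 0 := fun x => (lt_of_lt_of_le hc (hρ x)).ne'
  have main := key ε aP gam hε.ne' φ u hφ hu hφsupp husupp hρne
  refine ⟨main, ?_⟩
  have main0 := main (fun _ => 0)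
  simp only [pdM_zero, sub_self, zero_mul, Finset.sum_const_zero, integral_zero, mul_zero,
    add_zero] at main0
  rw [show (fun x => ∑ i, pP'' aP gam (rhoF ε φ x) * φ x * pd i φ x * u x i)
      = (fun x => ∑ i, pP'' aP gam (rhoF ε φ x) * pd i φ x * φ x * u x i)
      from funext fun x => Finset.sum_congr rfl fun i _ => by ring]
  exact main0


end EL
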